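/- Let r ≥ 2 and c₁ be integers such that gcd(r, c₁) > 1 and r does not divide c₁. Then there exists an integer n with (c₁ − 1)/r < n/(r − 1) < c₁/r, i.e., (c₁ − 1)(r − 1) < n·r < c₁(r − 1). -/

import Mathlib

/-!
Write `c₁ = q r + m` with `0 ≤ m < r`. Since `gcd(r, c₁)` divides `m` and `r ∤ c₁`, we get
`2 ≤ gcd(r, c₁) ≤ m`. The integer `n = c₁ - q - 1` then satisfies
`n r = c₁ (r - 1) - (r - m)`, which lies strictly between `(c₁ - 1)(r - 1)` and `c₁ (r - 1)`
because `1 < m < r`.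
-/

namespace Int

theorem gcd_le_emod_of_not_dvd {r c : ℤ} (hr : r ≠ 0) (hnd : ¬ r ∣ c) :
    (Int.gcd r c : ℤ) ≤ c % r := by
  have hpos : 0 < c % r :=
    (emod_nonneg c hr).lt_of_ne fun h => hnd (dvd_of_emod_eq_zero h.symm)
  have hdvd : (Int.gcd r c : ℤ) ∣ c % r :=
    (EuclideanDomain.dvd_mod_iff (gcd_dvd_left r c)).2 (gcd_dvd_right r c)
  exact le_of_dvd hpos hdvd

theorem sub_ediv_sub_one_mul_mem_Ioo {r c : ℤ} (hr : 0 < r) (hm : 1 < c % r) :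
    (c - c / r - 1) * r ∈ Set.Ioo ((c - 1) * (r - 1)) (c * (r - 1)) := by
  have hmr : c % r < r := emod_lt_of_pos c hr
  have hkey : (c - c / r - 1) * r = c * (r - 1) - (r - c % r) := by
    rw [emod_def]; ring
  constructor <;> nlinarith

end Int

theorem div_lt_div_sub_one_iff {r a b : ℤ} (hr : 1 < r) :
    (a : ℚ) / r < (b : ℚ) / ((r : ℚ) - 1) ↔ a * (r - 1) < b * r := by
  have hr1 : (0 : ℚ) < (r : ℚ) - 1 := by rw [sub_pos]; exact_mod_cast hr
  rw [div_lt_div_iff₀ (hr1.trans (sub_lt_self _ one_pos)) hr1]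
  exact_mod_cast Iff.rfl

theorem div_sub_one_lt_div_iff {r a b : ℤ} (hr : 1 < r) :
    (b : ℚ) / ((r : ℚ) - 1) < (a : ℚ) / r ↔ b * r < a * (r - 1) := by
  have hr1 : (0 : ℚ) < (r : ℚ) - 1 := by rw [sub_pos]; exact_mod_cast hr
  rw [div_lt_div_iff₀ hr1 (hr1.trans (sub_lt_self _ one_pos))]
  exact_mod_cast Iff.rfl

/-- Let `r ≥ 2` and `c₁` be integers with `gcd(r, c₁) > 1`
and `r ∤ c₁`.  Then there exists an integer `n` with
`(c₁ − 1)/r < n/(r − 1) < c₁/r`, i.e.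
`(c₁ − 1)(r − 1) < n·r < c₁(r − 1)`. -/
theorem exists_intermediate_slope (r c1 : ℤ) (hr : 2 ≤ r)
    (hgcd : 1 < Int.gcd r c1) (hnd : ¬ r ∣ c1) :
    ∃ n : ℤ,
      (((c1 : ℚ) - 1) / (r : ℚ) < (n : ℚ) / ((r : ℚ) - 1) ∧
        (n : ℚ) / ((r : ℚ) - 1) < (c1 : ℚ) / (r : ℚ)) ∧
      ((c1 - 1) * (r - 1) < n * r ∧ n * r < c1 * (r - 1)) := by
  have hm : 1 < c1 % r := by
    have := Int.gcd_le_emod_of_not_dvd (by omega : r ≠ 0) hnd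
    omega
  obtain ⟨hlow, hhigh⟩ := Int.sub_ediv_sub_one_mul_mem_Ioo (by omega) hm
  refine ⟨c1 - c1 / r - 1, ⟨?_, ?_⟩, hlow, hhigh⟩
  · exact_mod_cast (div_lt_div_sub_one_iff (a := c1 - 1) (by omega)).2 hlow
  · exact (div_sub_one_lt_div_iff (by omega)).2 hhigh
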